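/- Let X be a real normed vector space, let k ≥ 2 and r ≥ 1 be integers, and let Q_1, …, Q_r be pairwise disjoint finite sets in X, each of size k. Then for ANY partition {P_1, …, P_k} of the union P = Q_1 ∪ ⋯ ∪ Q_r with |P_i ∩ Q_j| = 1 for all i ∈ {1,…,k} and j ∈ {1,…,r}, the centroid c(P_i) of each part satisfies ‖c(P_i) − c(P)‖ ≤ ((k−1)/k)·max_{j ∈ [r]} diam Q_j; consequently the closed ball centered at c(P) of radius ((k−1)/k)·max_{j ∈ [r]} diam Q_j intersects the convex hull of P_i for every i. -/

import Mathlib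

/-!
If `T` meets each block `Q j` in exactly one point `a j`, then
`c(T) - c(⋃ Q) = (1/r) ∑ j (a j - c(Q j))`, and each summand has norm at most
`(k - 1)/k · diam Q j`, because `a - c(S)` is `1/|S|` times a sum of `|S| - 1`
differences `a - q` of points of `S`.
-/

/-- The centroid of a finite point set `S`: `c(S) = (1/|S|)·∑_{p ∈ S} p`. -/
noncomputable def centroid {X : Type*} [AddCommGroup X] [Module ℝ X] (S : Finset X) : X :=
  ((S.card : ℝ))⁻¹ • ∑ p ∈ S, p

open Function
open scoped Finset

section Centroid

variable {X : Type*} [AddCommGroup X] [Module ℝ X]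

@[simp]
lemma centroid_singleton (a : X) : centroid {a} = a := by
  simp [centroid]

lemma centroid_mem_convexHull {S : Finset X} (hS : S.Nonempty) :
    centroid S ∈ convexHull ℝ (S : Set X) := by
  have : centroid S = S.centerMass (fun _ => (1 : ℝ)) id := by
    simp [centroid, Finset.centerMass]
  rw [this]
  exact S.centerMass_id_mem_convexHull (fun _ _ => zero_le_one) (by simpa using hS.card_pos)

lemma centroid_biUnion_of_card_eq {ι : Type*} [Fintype ι] [DecidableEq X] {Q : ι → Finset X}
    {k : ℕ} (hQ : Pairwise (Disjoint on Q)) (hcard : ∀ j, #(Q j) = k) :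
    centroid (Finset.univ.biUnion Q) = (Fintype.card ι : ℝ)⁻¹ • ∑ j, centroid (Q j) := by
  have hQ' : ((Finset.univ : Finset ι) : Set ι).PairwiseDisjoint Q := hQ.set_pairwise _
  simp only [centroid, Finset.card_biUnion hQ', Finset.sum_biUnion hQ', hcard, Finset.sum_const,
    Finset.card_univ, smul_eq_mul, ← Finset.smul_sum, smul_smul]
  push_cast
  rw [mul_inv]

end Centroid

section Normed

variable {X : Type*} [NormedAddCommGroup X] [NormedSpace ℝ X]

lemma norm_sub_centroid_le [DecidableEq X] {S : Finset X} {a : X} (ha : a ∈ S) :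
    ‖a - centroid S‖ ≤ ((#S : ℝ) - 1) / #S * Metric.diam (S : Set X) := by
  have hpos : 0 < #S := Finset.card_pos.mpr ⟨a, ha⟩
  have hS : (#S : ℝ) ≠ 0 := by exact_mod_cast hpos.ne'
  have key : a - centroid S = (#S : ℝ)⁻¹ • ∑ q ∈ S.erase a, (a - q) := by
    rw [Finset.sum_erase _ (sub_self a), Finset.sum_sub_distrib, Finset.sum_const,
      ← Nat.cast_smul_eq_nsmul ℝ, smul_sub, inv_smul_smul₀ hS, centroid]
  calc ‖a - centroid S‖ ≤ (#S : ℝ)⁻¹ * ∑ q ∈ S.erase a, ‖a - q‖ := by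
        rw [key, norm_smul, norm_inv, Real.norm_natCast]
        gcongr
        exact norm_sum_le _ _
    _ ≤ (#S : ℝ)⁻¹ * (#(S.erase a) • Metric.diam (S : Set X)) := by
        gcongr
        refine Finset.sum_le_card_nsmul _ _ _ fun q hq => ?_
        rw [← dist_eq_norm]
        exact Metric.dist_le_diam_of_mem S.finite_toSet.isBounded ha (Finset.mem_of_mem_erase hq)
    _ = ((#S : ℝ) - 1) / #S * Metric.diam (S : Set X) := by
        rw [Finset.card_erase_of_mem ha, nsmul_eq_mul, Nat.cast_pred hpos]
        ring

lemma norm_inv_card_smul_sum_le {ι : Type*} [Fintype ι] [Nonempty ι] {f : ι → X} {C : ℝ}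
    (hf : ∀ j, ‖f j‖ ≤ C) : ‖(Fintype.card ι : ℝ)⁻¹ • ∑ j, f j‖ ≤ C := by
  rw [norm_smul, norm_inv, Real.norm_natCast,
    inv_mul_le_iff₀ (by exact_mod_cast Fintype.card_pos)]
  calc ‖∑ j, f j‖ ≤ ∑ j, ‖f j‖ := norm_sum_le _ _
    _ ≤ Fintype.card ι • C := by
        simpa using Finset.sum_le_card_nsmul Finset.univ _ C fun j _ => hf j
    _ = Fintype.card ι * C := nsmul_eq_mul _ _

lemma norm_centroid_transversal_sub_centroid_le {ι : Type*} [Fintype ι] [Nonempty ι]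
    [DecidableEq X] {Q : ι → Finset X} {k : ℕ} (hQ : Pairwise (Disjoint on Q))
    (hcard : ∀ j, #(Q j) = k) {T : Finset X} (hT : T ⊆ Finset.univ.biUnion Q)
    (htrans : ∀ j, #(T ∩ Q j) = 1) :
    ‖centroid T - centroid (Finset.univ.biUnion Q)‖ ≤
      ((k : ℝ) - 1) / k * ⨆ j, Metric.diam (Q j : Set X) := by
  have hT' : T = Finset.univ.biUnion fun j => T ∩ Q j := by
    rw [← Finset.inter_biUnion, Finset.inter_eq_left.mpr hT]
  have hTQ : Pairwise (Disjoint on fun j => T ∩ Q j) := fun j j' h =>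
    (hQ h).mono Finset.inter_subset_right Finset.inter_subset_right
  rw [hT', centroid_biUnion_of_card_eq hTQ htrans, centroid_biUnion_of_card_eq hQ hcard,
    ← smul_sub, ← Finset.sum_sub_distrib]
  refine norm_inv_card_smul_sum_le fun j => ?_
  obtain ⟨a, ha⟩ := Finset.card_eq_one.mp (htrans j)
  have haQ : a ∈ Q j := Finset.mem_of_mem_inter_right (ha ▸ Finset.mem_singleton_self a)
  have hk : 1 ≤ k := hcard j ▸ Finset.card_pos.mpr ⟨a, haQ⟩
  rw [ha, centroid_singleton]
  calc ‖a - centroid (Q j)‖ ≤ ((k : ℝ) - 1) / k * Metric.diam (Q j : Set X) :=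
        hcard j ▸ norm_sub_centroid_le haQ
    _ ≤ ((k : ℝ) - 1) / k * ⨆ j, Metric.diam (Q j : Set X) := by
        gcongr
        · exact div_nonneg (sub_nonneg.mpr (by exact_mod_cast hk)) (Nat.cast_nonneg k)
        · exact le_ciSup (f := fun j => Metric.diam (Q j : Set X)) (Finite.bddAbove_range _) j

end Normed

theorem centroid_bound_any_transversal_partition_general
    {X : Type*} [NormedAddCommGroup X] [NormedSpace ℝ X] [DecidableEq X]
    (k r : ℕ) (hr : 1 ≤ r)
    (Q : Fin r → Finset X) (hcard : ∀ j, (Q j).card = k)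
    (hdisj : ∀ j j', j ≠ j' → Disjoint (Q j) (Q j'))
    (Pparts : Fin k → Finset X)
    (hunion : Finset.univ.biUnion Pparts = Finset.univ.biUnion Q)
    (htrans : ∀ i j, (Pparts i ∩ Q j).card = 1) :
    (∀ i, ‖centroid (Pparts i) - centroid (Finset.univ.biUnion Q)‖ ≤
        ((k : ℝ) - 1) / (k : ℝ) * ⨆ j, Metric.diam (↑(Q j) : Set X)) ∧
    (∀ i, ∃ p ∈ convexHull ℝ (↑(Pparts i) : Set X),
        dist p (centroid (Finset.univ.biUnion Q)) ≤
          ((k : ℝ) - 1) / (k : ℝ) * ⨆ j, Metric.diam (↑(Q j) : Set X)) := by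
  have : Nonempty (Fin r) := ⟨⟨0, hr⟩⟩
  have hbound : ∀ i, ‖centroid (Pparts i) - centroid (Finset.univ.biUnion Q)‖ ≤
      ((k : ℝ) - 1) / k * ⨆ j, Metric.diam (Q j : Set X) := fun i =>
    norm_centroid_transversal_sub_centroid_le (fun j j' h => hdisj j j' h) hcard
      (hunion ▸ Finset.subset_biUnion_of_mem Pparts (Finset.mem_univ i)) (htrans i)
  refine ⟨hbound, fun i => ⟨centroid (Pparts i), centroid_mem_convexHull ?_,
    (dist_eq_norm _ _).trans_le (hbound i)⟩⟩
  obtain ⟨a, ha⟩ := Finset.card_eq_one.mp (htrans i ⟨0, hr⟩)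
  exact ⟨a, Finset.mem_of_mem_inter_left (ha ▸ Finset.mem_singleton_self a)⟩

/-- **Bohnenblust-type bound for transversal partitions in normed spaces.**
Let `X` be a real normed vector space and let `Q_1, …, Q_r` be pairwise disjoint
finite sets in `X`, each of size `k ≥ 2`. Then for ANY transversal partition
`{P_1, …, P_k}` of the union `P` (with `|P_i ∩ Q_j| = 1` for all `i, j`), each
centroid satisfies `‖c(P_i) − c(P)‖ ≤ ((k−1)/k)·max_j diam Q_j`; consequently the
closed ball centered at `c(P)` of radius `((k−1)/k)·max_j diam Q_j` intersects the
convex hull of every part. -/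
theorem centroid_bound_any_transversal_partition
    {X : Type*} [NormedAddCommGroup X] [NormedSpace ℝ X] [DecidableEq X]
    (k r : ℕ) (hk : 2 ≤ k) (hr : 1 ≤ r)
    (Q : Fin r → Finset X) (hcard : ∀ j, (Q j).card = k)
    (hdisj : ∀ j j', j ≠ j' → Disjoint (Q j) (Q j'))
    (Pparts : Fin k → Finset X)
    (hpdisj : ∀ i i', i ≠ i' → Disjoint (Pparts i) (Pparts i'))
    (hunion : Finset.univ.biUnion Pparts = Finset.univ.biUnion Q)
    (htrans : ∀ i j, (Pparts i ∩ Q j).card = 1) :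
    (∀ i, ‖centroid (Pparts i) - centroid (Finset.univ.biUnion Q)‖ ≤
        ((k : ℝ) - 1) / (k : ℝ) * ⨆ j, Metric.diam (↑(Q j) : Set X)) ∧
    (∀ i, ∃ p ∈ convexHull ℝ (↑(Pparts i) : Set X),
        dist p (centroid (Finset.univ.biUnion Q)) ≤
          ((k : ℝ) - 1) / (k : ℝ) * ⨆ j, Metric.diam (↑(Q j) : Set X)) :=
  centroid_bound_any_transversal_partition_general k r hr Q hcard hdisj Pparts hunion htrans
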